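/- Let n ∈ ℕ with n ≥ 3, let 𝒢=(G,w) be a connected positive-weighted graph with exactly n vertices, labelled 1,…,n, and define D_{î} = D_{[n]∖{i}}(𝒢) for each i ∈ [n]. If the maximum of {D_{î}}_{i ∈ [n]} is achieved by at least two indices, then for every i ∈ [n] one has the strict inequality (n−2)·D_{î} < Σ_{j ∈ [n]∖{i}} D_{ĵ}. -/

import Mathlib

open SimpleGraph Finset

/-- The total weight of a subgraph: the sum of the weights of its edges. -/
noncomputable def subgraphWeight {V : Type} [Fintype V] {G : SimpleGraph V}
    (w : Sym2 V → ℝ) (R : G.Subgraph) : ℝ :=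
  ∑ e ∈ (Set.toFinite R.edgeSet).toFinset, w e

/-- `graphDist G w I` is the minimum of `subgraphWeight w R` over connected
subgraphs `R` of `G` whose vertex set contains `I`. -/
noncomputable def graphDist {V : Type} [Fintype V] (G : SimpleGraph V)
    (w : Sym2 V → ℝ) (I : Set V) : ℝ :=
  sInf { x : ℝ | ∃ R : G.Subgraph, R.Connected ∧ I ⊆ R.verts ∧ subgraphWeight w R = x }

/-- A weight function is positive on a graph if every edge has positive weight. -/
def PosWeighted {V : Type} (G : SimpleGraph V) (w : Sym2 V → ℝ) : Prop :=
  ∀ e ∈ G.edgeSet, 0 < w e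

/-- `Dhat G w i` is the `(n-1)`-weight `D_{[n]∖{i}}(𝒢)` for a graph on vertex
set `Fin n`. -/
noncomputable def Dhat {n : ℕ} (G : SimpleGraph (Fin n)) (w : Sym2 (Fin n) → ℝ)
    (i : Fin n) : ℝ :=
  graphDist G w {j | j ≠ i}

/-! Write `D v` for the weight of an optimal connected subgraph containing all vertices but `v`,
and `M = D a = D b` for the maximum. Attaching `v` to an optimal subgraph for `D v` by an edge `vu`
gives `M - D v ≤ w(vu)`. Now take a third vertex `k` and an optimal subgraph for `D k`, rooted
at `a`: sending every other vertex `v ≠ a, k` to the edge towards a neighbour closer to `a` is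
injective, so the gaps `M - D v` over these vertices sum to less than `D k`, strictly because the
gap at `b` is `0`. Hence all the gaps together sum to less than `M`, so that
`∑ j ≠ i, D j > (n - 2) M ≥ (n - 2) D i`. -/

theorem Sym2.injOn_mk_of_lt {α β : Type*} [Preorder β] (d : α → β) {p : α → α} {S : Set α}
    (h : ∀ v ∈ S, d (p v) < d v) : S.InjOn fun v => s(v, p v) := by
  intro v₁ h₁ v₂ h₂ heq
  rcases Sym2.eq_iff.mp heq with ⟨rfl, -⟩ | ⟨rfl, hp⟩
  · rfl
  · have h₁' := h _ h₁
    rw [hp] at h₁'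
    exact absurd (h _ h₂) (lt_asymm h₁')

namespace SimpleGraph

variable {V : Type}

theorem Reachable.exists_adj_dist_lt {H : SimpleGraph V} {u v : V} (h : H.Reachable u v)
    (hne : u ≠ v) : ∃ x, H.Adj u x ∧ H.dist x v < H.dist u v := by
  obtain ⟨p, hp⟩ := h.exists_walk_length_eq_dist
  cases p with
  | nil => exact absurd rfl hne
  | cons hadj q =>
    refine ⟨_, hadj, ?_⟩
    calc H.dist _ v ≤ q.length := dist_le q
      _ < (Walk.cons hadj q).length := Nat.lt_succ_self _
      _ = H.dist u v := hp

theorem Subgraph.Connected.spanningCoe_reachable {G : SimpleGraph V} {R : G.Subgraph}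
    (hR : R.Connected) {u v : V} (hu : u ∈ R.verts) (hv : v ∈ R.verts) :
    R.spanningCoe.Reachable u v :=
  (hR.preconnected ⟨u, hu⟩ ⟨v, hv⟩).map ⟨Subtype.val, id⟩

theorem Subgraph.Connected.exists_parent {G : SimpleGraph V} {R : G.Subgraph}
    (hR : R.Connected) {r : V} (hr : r ∈ R.verts) :
    ∃ p : V → V, (∀ v ∈ R.verts \ {r}, R.Adj v (p v)) ∧
      (R.verts \ {r}).InjOn fun v => s(v, p v) := by
  have hcloser : ∀ v ∈ R.verts \ {r}, ∃ u, R.Adj v u ∧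
      R.spanningCoe.dist u r < R.spanningCoe.dist v r := fun v hv =>
    (hR.spanningCoe_reachable hv.1 hr).exists_adj_dist_lt hv.2
  choose! p hadj hlt using hcloser
  exact ⟨p, hadj, Sym2.injOn_mk_of_lt (fun x => R.spanningCoe.dist x r) hlt⟩

variable [Fintype V] {G : SimpleGraph V} {w : Sym2 V → ℝ}

theorem sum_le_subgraphWeight_of_injOn {α : Type*} {R : G.Subgraph}
    (hw : ∀ e ∈ R.edgeSet, 0 ≤ w e) {S : Finset α} {f : α → Sym2 V}
    (hf : ∀ a ∈ S, f a ∈ R.edgeSet) (hinj : Set.InjOn f S) :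
    ∑ a ∈ S, w (f a) ≤ subgraphWeight w R := by
  classical
  rw [← Finset.sum_image hinj]
  refine Finset.sum_le_sum_of_subset_of_nonneg ?_ fun e he _ => hw e (by simpa using he)
  intro e he
  obtain ⟨a, ha, rfl⟩ := Finset.mem_image.mp he
  simpa using hf a ha

theorem subgraphWeight_sup_le {A B : G.Subgraph} (hw : ∀ e ∈ A.edgeSet, 0 ≤ w e) :
    subgraphWeight w (A ⊔ B) ≤ subgraphWeight w A + subgraphWeight w B := by
  classical
  have hunion : (Set.toFinite (A ⊔ B).edgeSet).toFinset =
      (Set.toFinite A.edgeSet).toFinset ∪ (Set.toFinite B.edgeSet).toFinset := by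
    ext e
    simp [Subgraph.edgeSet_sup]
  have hinter : 0 ≤ ∑ e ∈ (Set.toFinite A.edgeSet).toFinset ∩
      (Set.toFinite B.edgeSet).toFinset, w e :=
    Finset.sum_nonneg fun e he => hw e (by simpa using (Finset.mem_inter.mp he).1)
  unfold subgraphWeight
  rw [hunion]
  linarith [Finset.sum_union_inter (f := w) (s₁ := (Set.toFinite A.edgeSet).toFinset)
    (s₂ := (Set.toFinite B.edgeSet).toFinset)]

theorem subgraphWeight_subgraphOfAdj {u v : V} (h : G.Adj u v) :
    subgraphWeight w (G.subgraphOfAdj h) = w s(u, v) := by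
  have hedges : (Set.toFinite (G.subgraphOfAdj h).edgeSet).toFinset = {s(u, v)} := by
    ext e
    simp
  rw [subgraphWeight, hedges, Finset.sum_singleton]

theorem finite_setOf_subgraphWeight (I : Set V) :
    {x : ℝ | ∃ R : G.Subgraph, R.Connected ∧ I ⊆ R.verts ∧ subgraphWeight w R = x}.Finite :=
  (Set.finite_range (subgraphWeight w)).subset fun _ ⟨R, _, _, hR⟩ => ⟨R, hR⟩

theorem graphDist_le {I : Set V} {R : G.Subgraph} (hR : R.Connected) (hI : I ⊆ R.verts) :
    graphDist G w I ≤ subgraphWeight w R :=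
  csInf_le (finite_setOf_subgraphWeight I).bddBelow ⟨R, hR, hI, rfl⟩

theorem Connected.exists_subgraphWeight_eq_graphDist (hG : G.Connected) (I : Set V) :
    ∃ R : G.Subgraph, R.Connected ∧ I ⊆ R.verts ∧ subgraphWeight w R = graphDist G w I := by
  have htop : (⊤ : G.Subgraph).Connected :=
    Subgraph.connected_iff'.mpr (Subgraph.topIso.connected_iff.mpr hG)
  have hne : {x : ℝ | ∃ R : G.Subgraph, R.Connected ∧ I ⊆ R.verts ∧
      subgraphWeight w R = x}.Nonempty := ⟨subgraphWeight w ⊤, ⊤, htop, by simp, rfl⟩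
  exact hne.csInf_mem (finite_setOf_subgraphWeight I)

theorem graphDist_mono (hG : G.Connected) {I J : Set V} (h : I ⊆ J) :
    graphDist G w I ≤ graphDist G w J := by
  obtain ⟨R, hR, hJ, hRw⟩ := hG.exists_subgraphWeight_eq_graphDist (w := w) J
  exact hRw ▸ graphDist_le hR (h.trans hJ)

theorem graphDist_insert_le (hG : G.Connected) (hw : ∀ e ∈ G.edgeSet, 0 ≤ w e) {I : Set V}
    {u v : V} (hadj : G.Adj v u) (hu : u ∈ I) :
    graphDist G w (insert v I) ≤ graphDist G w I + w s(v, u) := by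
  obtain ⟨R, hR, hI, hRw⟩ := hG.exists_subgraphWeight_eq_graphDist (w := w) I
  have hconn : (R ⊔ G.subgraphOfAdj hadj).Connected :=
    Subgraph.connected_sup hR.preconnected (Subgraph.subgraphOfAdj_connected hadj).preconnected
      ⟨u, hI hu, by simp⟩
  have hverts : insert v I ⊆ (R ⊔ G.subgraphOfAdj hadj).verts :=
    Set.insert_subset (Or.inr (by simp)) fun x hx => Or.inl (hI hx)
  calc graphDist G w (insert v I) ≤ subgraphWeight w (R ⊔ G.subgraphOfAdj hadj) :=
        graphDist_le hconn hverts
    _ ≤ subgraphWeight w R + subgraphWeight w (G.subgraphOfAdj hadj) :=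
        subgraphWeight_sup_le fun e he => hw e (R.edgeSet_subset he)
    _ = graphDist G w I + w s(v, u) := by rw [hRw, subgraphWeight_subgraphOfAdj]

theorem graphDist_le_graphDist_compl_add (hG : G.Connected) (hw : ∀ e ∈ G.edgeSet, 0 ≤ w e)
    (I : Set V) {u v : V} (hadj : G.Adj v u) :
    graphDist G w I ≤ graphDist G w {j | j ≠ v} + w s(v, u) :=
  calc graphDist G w I ≤ graphDist G w (insert v {j | j ≠ v}) :=
        graphDist_mono hG fun x _ => em (x = v)
    _ ≤ graphDist G w {j | j ≠ v} + w s(v, u) := graphDist_insert_le hG hw hadj hadj.ne'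

theorem sum_sub_graphDist_compl_lt (hG : G.Connected) (hw : PosWeighted G w) {a b k : V}
    (hab : a ≠ b) (hka : k ≠ a) (hkb : k ≠ b)
    (hb : graphDist G w {j | j ≠ b} = graphDist G w {j | j ≠ a}) :
    ∑ v, (graphDist G w {j | j ≠ a} - graphDist G w {j | j ≠ v}) <
      graphDist G w {j | j ≠ a} := by
  classical
  set D : V → ℝ := fun v => graphDist G w {j | j ≠ v} with hD
  obtain ⟨R, hR, hRverts, hRw⟩ := hG.exists_subgraphWeight_eq_graphDist (w := w) {j | j ≠ k}
  obtain ⟨p, hpadj, hpinj⟩ := hR.exists_parent (hRverts hka.symm)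
  set S := (Finset.univ.erase a).erase k
  have hSR : ∀ v ∈ S, v ∈ R.verts \ {a} := by
    intro v hv
    simp only [S, Finset.mem_erase, Finset.mem_univ, and_true] at hv
    exact ⟨hRverts hv.1, hv.2⟩
  have hbS : b ∈ S := by simp [S, hab.symm, hkb.symm]
  have hgap : ∀ v u, G.Adj v u → D a - D v ≤ w s(v, u) := fun v u h => by
    linarith [graphDist_le_graphDist_compl_add hG (fun e he => (hw e he).le) {j | j ≠ a} h]
  have hS : ∑ v ∈ S, (D a - D v) < D k :=
    calc ∑ v ∈ S, (D a - D v) < ∑ v ∈ S, w s(v, p v) :=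
          Finset.sum_lt_sum (fun v hv => hgap v _ (hpadj v (hSR v hv)).adj_sub)
            ⟨b, hbS, by
              simpa [hD, hb] using hw _ (G.mem_edgeSet.mpr (hpadj b (hSR b hbS)).adj_sub)⟩
      _ ≤ subgraphWeight w R :=
          sum_le_subgraphWeight_of_injOn (fun e he => (hw e (R.edgeSet_subset he)).le)
            (fun v hv => hpadj v (hSR v hv)) (hpinj.mono fun v hv => hSR v hv)
      _ = D k := hRw
  rw [← Finset.add_sum_erase _ _ (Finset.mem_univ a),
    ← Finset.add_sum_erase _ _ (Finset.mem_erase.mpr ⟨hka, Finset.mem_univ k⟩)]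
  linarith

end SimpleGraph

theorem card_sub_two_mul_lt_sum_erase {ι : Type*} [Fintype ι] [DecidableEq ι] {D : ι → ℝ}
    {M : ℝ} (hD : ∀ k, D k ≤ M) (hgap : ∑ k, (M - D k) < M) (i : ι) :
    ((Fintype.card ι : ℝ) - 2) * D i < ∑ j ∈ Finset.univ.erase i, D j := by
  have hsplit := Finset.add_sum_erase Finset.univ D (Finset.mem_univ i)
  have hcard : (1 : ℝ) ≤ Fintype.card ι := by exact_mod_cast Fintype.card_pos_iff.mpr ⟨i⟩
  rw [Finset.sum_sub_distrib, Finset.sum_const, Finset.card_univ, nsmul_eq_mul] at hgap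
  nlinarith [mul_nonneg (sub_nonneg.mpr hcard) (sub_nonneg.mpr (hD i))]

/-- Theorem 4.1, necessity, part (ii): if the maximum of the `(n-1)`-weights of
a connected positive-weighted graph with exactly `n` vertices is achieved at
least twice, then the inequalities are strict. -/
theorem graph_exactly_n_vertices_strict_ineq {n : ℕ} (hn : 3 ≤ n)
    (G : SimpleGraph (Fin n)) (w : Sym2 (Fin n) → ℝ)
    (hG : G.Connected) (hw : PosWeighted G w)
    (hmax : ∃ i j : Fin n, i ≠ j ∧ (∀ k, Dhat G w k ≤ Dhat G w i) ∧
      Dhat G w i = Dhat G w j) :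
    ∀ i : Fin n, ((n : ℝ) - 2) * Dhat G w i < ∑ j ∈ Finset.univ.erase i, Dhat G w j := by
  obtain ⟨a, b, hab, hmaxa, hba⟩ := hmax
  obtain ⟨k, -, hk⟩ := Finset.exists_mem_notMem_of_card_lt_card (s := {a, b}) (t := Finset.univ)
    (by simpa using Finset.card_le_two.trans_lt (by omega : 2 < n))
  rw [Finset.mem_insert, Finset.mem_singleton, not_or] at hk
  have hgap : ∑ v, (Dhat G w a - Dhat G w v) < Dhat G w a :=
    SimpleGraph.sum_sub_graphDist_compl_lt hG hw hab hk.1 hk.2 hba.symm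
  intro i
  simpa using card_sub_two_mul_lt_sum_erase hmaxa hgap i
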